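/- arXiv:1609.08742 — 7 statements merged into one kernel-verified Lean document; each statement's English description precedes it below -/
import Mathlib

section
/- Let f: ℝ → ℂ be square-integrable and let f̃ denote its Fourier–Plancherel transform. Assume that f̃ is integrable and that f is continuous at the point y ∈ ℝ. Then f(y) = ∫_ℝ f̃(ξ) e^{2πiξy} dξ. -/
/-! Since `f̃` is integrable, `F = 𝓕⁻ f̃` is a continuous function. For a Schwartz function `Ψ`
and a compactly supported continuous `g`, the multiplication formula gives
`∫ g · 𝓕 Ψ = ∫ 𝓕 g · Ψ`; both sides are controlled by `‖f - g‖₂ = ‖f̃ - 𝓕 g‖₂` through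
Cauchy–Schwarz, so approximating `f` by such `g` yields `∫ f · 𝓕 Ψ = ∫ f̃ · Ψ`. With
`Ψ = 𝓕⁻ w` for a smooth compactly supported `w`, this reads `∫ f · w = ∫ F · w`, hence `f = F`
almost everywhere. Two functions that agree almost everywhere and are continuous at `y` agree at
`y`, because every neighbourhood of `y` has positive measure. -/

open MeasureTheory Real Complex
open Filter Topology
open scoped FourierTransform SchwartzMap ENNReal

theorem ENNReal.eq_zero_of_forall_le_mul {a C : ℝ≥0∞} (hC : C ≠ ⊤)
    (h : ∀ ε : ℝ≥0∞, ε ≠ 0 → a ≤ ε * C) : a = 0 := by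
  have hlim : Tendsto (fun ε : ℝ≥0∞ => ε * C) (𝓝[>] 0) (𝓝 0) := by
    simpa using (ENNReal.Tendsto.mul_const (tendsto_nhdsWithin_of_tendsto_nhds tendsto_id)
      (Or.inr hC) : Tendsto (fun ε : ℝ≥0∞ => ε * C) (𝓝[>] 0) (𝓝 (0 * C)))
  exact nonpos_iff_eq_zero.1 <|
    ge_of_tendsto hlim (eventually_nhdsWithin_of_forall fun ε hε => h ε (ne_of_gt hε))

theorem MeasureTheory.Measure.eq_of_ae_eq_of_continuousAt {X Y : Type*} [TopologicalSpace X]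
    [MeasurableSpace X] [TopologicalSpace Y] [T2Space Y] {μ : Measure X} [μ.IsOpenPosMeasure]
    {f g : X → Y} {x : X} (h : f =ᵐ[μ] g) (hf : ContinuousAt f x) (hg : ContinuousAt g x) :
    f x = g x := by
  by_contra hne
  exact (measure_pos_of_mem_nhds μ ((hf.ne_iff_eventually_ne hg).1 hne)).ne' (ae_iff.1 h)

namespace MeasureTheory

variable {α 𝕜 : Type*} [MeasurableSpace α] {μ : Measure α} [RCLike 𝕜] {p q : ℝ≥0∞}
  [p.HolderTriple q 1]

theorem enorm_integral_mul_le_eLpNorm_mul_eLpNorm {u v : α → 𝕜} (hu : AEStronglyMeasurable u μ)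
    (hv : AEStronglyMeasurable v μ) :
    ‖∫ x, u x * v x ∂μ‖ₑ ≤ eLpNorm u p μ * eLpNorm v q μ :=
  calc ‖∫ x, u x * v x ∂μ‖ₑ ≤ ∫⁻ x, ‖u x * v x‖ₑ ∂μ := enorm_integral_le_lintegral_enorm _
    _ = eLpNorm (u • v) 1 μ := eLpNorm_one_eq_lintegral_enorm.symm
    _ ≤ eLpNorm u p μ * eLpNorm v q μ := eLpNorm_smul_le_mul_eLpNorm hv hu

theorem enorm_integral_mul_sub_integral_mul_le {u v φ : α → 𝕜} (hu : MemLp u p μ)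
    (hv : MemLp v p μ) (hφ : MemLp φ q μ) :
    ‖∫ x, u x * φ x ∂μ - ∫ x, v x * φ x ∂μ‖ₑ ≤ eLpNorm (u - v) p μ * eLpNorm φ q μ := by
  rw [← integral_sub (f := fun x => u x * φ x) (g := fun x => v x * φ x)
    (hu.integrable_mul hφ) (hv.integrable_mul hφ)]
  simp_rw [← sub_mul]
  exact enorm_integral_mul_le_eLpNorm_mul_eLpNorm (hu.1.sub hv.1) hφ.1

end MeasureTheory

section Fourier

variable {V : Type*} [NormedAddCommGroup V] [InnerProductSpace ℝ V] [FiniteDimensional ℝ V]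
  [MeasurableSpace V] [BorelSpace V]

theorem MeasureTheory.Integrable.continuous_fourier {u : V → ℂ} (hu : Integrable u) :
    Continuous (𝓕 u) :=
  VectorFourier.fourierIntegral_continuous continuous_fourierChar continuous_inner hu

theorem MeasureTheory.Integrable.continuous_fourierInv {u : V → ℂ} (hu : Integrable u) :
    Continuous (𝓕⁻ u) :=
  VectorFourier.fourierIntegral_continuous continuous_fourierChar continuous_inner.neg hu

theorem Real.integral_fourier_mul_eq {u v : V → ℂ} (hu : Integrable u) (hv : Integrable v) :
    ∫ ξ, 𝓕 u ξ * v ξ = ∫ x, u x * 𝓕 v x := by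
  simpa using! VectorFourier.integral_fourierIntegral_smul_eq_flip (L := innerₗ V)
    continuous_fourierChar continuous_inner hu hv

theorem Real.integral_fourierInv_mul_eq {u v : V → ℂ} (hu : Integrable u) (hv : Integrable v) :
    ∫ ξ, 𝓕⁻ u ξ * v ξ = ∫ x, u x * 𝓕⁻ v x := by
  have hflip : (-innerₗ V).flip = -innerₗ V := by ext; simp [real_inner_comm]
  simpa [hflip] using! VectorFourier.integral_fourierIntegral_smul_eq_flip (L := -innerₗ V)
    continuous_fourierChar continuous_inner.neg hu hv

theorem Real.ae_eq_fourierInv_of_forall_integral_mul_fourier_eq {f h : V → ℂ}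
    (hf : LocallyIntegrable f) (hh : Integrable h)
    (hweak : ∀ Ψ : 𝓢(V, ℂ), ∫ x, f x * 𝓕 Ψ x = ∫ ξ, h ξ * Ψ ξ) :
    f =ᵐ[volume] 𝓕⁻ h := by
  refine ae_eq_of_integral_contDiff_smul_eq hf hh.continuous_fourierInv.locallyIntegrable
    fun g hg_smooth hg_supp => ?_
  let w : 𝓢(V, ℂ) := (hg_supp.comp_left ofReal_zero).toSchwartzMap
    (ofRealCLM.contDiff.comp hg_smooth)
  have hw : ⇑w = fun x => (g x : ℂ) := rfl
  calc ∫ x, g x • f x = ∫ x, f x * 𝓕 (𝓕⁻ w) x := by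
        simp [hw, real_smul, mul_comm]
    _ = ∫ ξ, h ξ * 𝓕⁻ w ξ := hweak _
    _ = ∫ ξ, 𝓕⁻ h ξ * w ξ := by
        rw [SchwartzMap.fourierInv_coe, integral_fourierInv_mul_eq hh w.integrable]
    _ = ∫ x, g x • 𝓕⁻ h x := by
        simp [hw, real_smul, mul_comm]

/-- By Plancherel's theorem for `L¹ ∩ L²`, this determines `ftilde` up to a.e. equality as the
Fourier–Plancherel transform of `f`. -/
def IsFourierPlancherel (f ftilde : V → ℂ) : Prop :=
  ∀ g : V → ℂ, Integrable g → MemLp g 2 → eLpNorm (ftilde - 𝓕 g) 2 = eLpNorm (f - g) 2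

namespace IsFourierPlancherel

variable {f ftilde : V → ℂ}

theorem memLp (h : IsFourierPlancherel f ftilde) (hf : MemLp f 2)
    (hft : AEStronglyMeasurable ftilde) : MemLp ftilde 2 := by
  have hfourier_zero : 𝓕 (0 : V → ℂ) = 0 := by ext; simp [fourier_eq]
  have h0 := h 0 (integrable_zero _ _ _) MemLp.zero
  rw [hfourier_zero, sub_zero, sub_zero] at h0
  exact ⟨hft, h0 ▸ hf.2⟩

theorem memLp_fourier (h : IsFourierPlancherel f ftilde) (hf : MemLp f 2) (hft : MemLp ftilde 2)
    {g : V → ℂ} (hg₁ : Integrable g) (hg₂ : MemLp g 2) : MemLp (𝓕 g) 2 := by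
  have hdiff : MemLp (ftilde - 𝓕 g) 2 :=
    ⟨hft.1.sub hg₁.continuous_fourier.aestronglyMeasurable,
      (h g hg₁ hg₂).trans_lt (hf.sub hg₂).2⟩
  simpa using hft.sub hdiff

theorem integral_mul_fourier_eq (h : IsFourierPlancherel f ftilde) (hf : MemLp f 2)
    (hft : MemLp ftilde 2) (Ψ : 𝓢(V, ℂ)) :
    ∫ x, f x * 𝓕 Ψ x = ∫ ξ, ftilde ξ * Ψ ξ := by
  set Φ : 𝓢(V, ℂ) := 𝓕 Ψ with hΦ
  have hΦ₂ : MemLp Φ 2 := Φ.memLp 2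
  have hΨ₂ : MemLp Ψ 2 := Ψ.memLp 2
  have hC : eLpNorm Φ 2 volume + eLpNorm Ψ 2 volume ≠ ⊤ :=
    ENNReal.add_ne_top.2 ⟨hΦ₂.eLpNorm_ne_top, hΨ₂.eLpNorm_ne_top⟩
  refine sub_eq_zero.1 <| enorm_eq_zero.1 <| ENNReal.eq_zero_of_forall_le_mul hC fun ε hε => ?_
  obtain ⟨g, hg_supp, hfg, hg_cont, hg₂⟩ :=
    hf.exists_hasCompactSupport_eLpNorm_sub_le ENNReal.ofNat_ne_top hε
  have hg₁ : Integrable g := hg_cont.integrable_of_hasCompactSupport hg_supp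
  have hmul : ∫ x, g x * Φ x = ∫ ξ, 𝓕 g ξ * Ψ ξ := by
    rw [hΦ, SchwartzMap.fourier_coe, integral_fourier_mul_eq hg₁ Ψ.integrable]
  have hpair_f := enorm_integral_mul_sub_integral_mul_le hf hg₂ hΦ₂
  have hpair_ft :=
    enorm_integral_mul_sub_integral_mul_le (h.memLp_fourier hf hft hg₁ hg₂) hft hΨ₂
  rw [eLpNorm_sub_comm, h g hg₁ hg₂] at hpair_ft
  calc ‖(∫ x, f x * Φ x) - ∫ ξ, ftilde ξ * Ψ ξ‖ₑ
      = ‖((∫ x, f x * Φ x) - ∫ x, g x * Φ x)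
          + ((∫ ξ, 𝓕 g ξ * Ψ ξ) - ∫ ξ, ftilde ξ * Ψ ξ)‖ₑ := by
        rw [hmul, sub_add_sub_cancel]
    _ ≤ eLpNorm (f - g) 2 volume * eLpNorm Φ 2 volume
          + eLpNorm (f - g) 2 volume * eLpNorm Ψ 2 volume :=
        (enorm_add_le _ _).trans (add_le_add hpair_f hpair_ft)
    _ ≤ ε * (eLpNorm Φ 2 volume + eLpNorm Ψ 2 volume) := by
        rw [mul_add]
        gcongr

end IsFourierPlancherel

end Fourier

theorem Real.fourier_eq_integral_mul_exp (g : ℝ → ℂ) (ξ : ℝ) :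
    𝓕 g ξ = ∫ x, g x * Complex.exp (-(2 * π * I * x * ξ)) := by
  rw [fourier_real_eq_integral_exp_smul]
  congr 1 with x
  rw [smul_eq_mul, mul_comm]
  push_cast
  ring_nf

theorem Real.fourierInv_eq_integral_mul_exp (g : ℝ → ℂ) (y : ℝ) :
    𝓕⁻ g y = ∫ ξ, g ξ * Complex.exp (2 * π * I * ξ * y) := by
  rw [fourierInv_eq_fourier_neg, fourier_real_eq_integral_exp_smul]
  congr 1 with x
  rw [smul_eq_mul, mul_comm]
  push_cast
  ring_nf

/-- Pointwise Fourier inversion at a point of continuity: if `f ∈ L²(ℝ)`, `ftilde` is the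
Fourier–Plancherel transform of `f` (characterized by the fact that it is at `L²`-distance
`‖f - g‖₂` from the Fourier integral of any `g ∈ L¹ ∩ L²`), `ftilde` is integrable and `f`
is continuous at `y`, then `f(y) = ∫ ftilde(ξ) e^{2πiξy} dξ`. -/
theorem plancherel_pointwise_inversion
    (f ftilde : ℝ → ℂ)
    (hf : MemLp f 2 (volume : Measure ℝ))
    (hchar : ∀ g : ℝ → ℂ, Integrable g → MemLp g 2 (volume : Measure ℝ) →
      eLpNorm (fun ξ : ℝ =>
          ftilde ξ - ∫ x : ℝ, g x * Complex.exp (-(2 * π * I * x * ξ)))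
        2 (volume : Measure ℝ)
      = eLpNorm (fun x : ℝ => f x - g x) 2 (volume : Measure ℝ))
    (hft : Integrable ftilde)
    (y : ℝ) (hcont : ContinuousAt f y) :
    f y = ∫ ξ : ℝ, ftilde ξ * Complex.exp (2 * π * I * ξ * y) := by
  have hplanch : IsFourierPlancherel f ftilde := fun g hg₁ hg₂ => by
    simpa only [Pi.sub_def, fourier_eq_integral_mul_exp] using hchar g hg₁ hg₂
  have hae : f =ᵐ[volume] 𝓕⁻ ftilde :=
    ae_eq_fourierInv_of_forall_integral_mul_fourier_eq (hf.locallyIntegrable one_le_two) hft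
      (hplanch.integral_mul_fourier_eq hf (hplanch.memLp hf hft.1))
  rw [← fourierInv_eq_integral_mul_exp]
  exact Measure.eq_of_ae_eq_of_continuousAt hae hcont hft.continuous_fourierInv.continuousAt
end

section
/- Let n ∈ ℕ and let f: ℝ → ℂ be n times continuously differentiable with f^{(k)} square-integrable for all 0 ≤ k ≤ n. Then the Fourier–Plancherel transform of f^{(n)} agrees almost everywhere with ξ ↦ (2πiξ)^n f̃(ξ), where f̃ is the Fourier–Plancherel transform of f. In particular, the function ξ ↦ (2πiξ)^n f̃(ξ) lies in L²(ℝ). -/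
/-!
The transform characterised by the distance identities is the unitary `L²` Fourier transform:
`‖f̃ - 𝓕ψ‖₂ = ‖f - ψ‖₂ = ‖𝓕f - 𝓕ψ‖₂` holds for `ψ` in the dense Schwartz class, hence in the
limit `ψ → f`. Integration by parts against Schwartz functions identifies the tempered
distribution of `f^{(n)}` with the `n`-th distributional derivative of `f`, whose Fourier
transform is `(2πiξ)^n 𝓕f`; testing this identity of distributions against smooth compactly
supported functions turns it into an almost everywhere identity of functions.
-/

open MeasureTheory Real Complex TemperedDistribution LineDeriv
open scoped FourierTransform SchwartzMap

section Identification

variable {E F : Type*} [NormedAddCommGroup E] [InnerProductSpace ℝ E] [FiniteDimensional ℝ E]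
  [MeasurableSpace E] [BorelSpace E] [NormedAddCommGroup F] [InnerProductSpace ℂ F]
  [CompleteSpace F]

theorem ae_eq_fourier_of_forall_eLpNorm_sub_fourier_eq {f ft : E → F} (hf : MemLp f 2)
    (hft : AEStronglyMeasurable ft)
    (h : ∀ g : E → F, Integrable g → MemLp g 2 →
      eLpNorm (fun ξ => ft ξ - 𝓕 g ξ) 2 = eLpNorm (fun x => f x - g x) 2) :
    ft =ᵐ[volume] (𝓕 (hf.toLp f) : Lp F 2 (volume : Measure E)) := by
  have hψ (ψ : 𝓢(E, F)) : eLpNorm (ft - ⇑(𝓕 ψ : 𝓢(E, F))) 2 = eLpNorm (f - (ψ : E → F)) 2 :=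
    h ψ (ψ.integrable (μ := volume)) (ψ.memLp 2 volume)
  have hft2 : MemLp ft 2 := by
    have h0 := hψ 0
    simp only [FourierTransform.fourier_zero, FunLike.coe_zero, sub_zero] at h0
    exact ⟨hft, h0 ▸ hf.eLpNorm_lt_top⟩
  have hdist (u : Lp F 2 (volume : Measure E)) : ‖hft2.toLp ft - 𝓕 u‖ = ‖hf.toLp f - u‖ := by
    refine (SchwartzMap.denseRange_toLpCLM (F := F) (p := 2) ENNReal.ofNat_ne_top).induction_on
      (p := fun u => ‖hft2.toLp ft - 𝓕 u‖ = ‖hf.toLp f - u‖) u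
      (isClosed_eq (by fun_prop) (by fun_prop)) fun ψ => ?_
    simp only [SchwartzMap.toLpCLM_apply, SchwartzMap.toLp_fourier_eq]
    rw [SchwartzMap.toLp, SchwartzMap.toLp, ← MemLp.toLp_sub, ← MemLp.toLp_sub, Lp.norm_toLp,
      Lp.norm_toLp, hψ]
  have hfourier : hft2.toLp ft = 𝓕 (hf.toLp f) := by
    simpa [sub_eq_zero] using hdist (hf.toLp f)
  exact hft2.coeFn_toLp.symm.trans (by rw [hfourier])

end Identification

theorem SchwartzMap.integrable_smul_of_memLp {E F : Type*} [NormedAddCommGroup E]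
    [NormedSpace ℝ E] [MeasurableSpace E] [BorelSpace E] {μ : Measure E} [μ.HasTemperateGrowth]
    [NormedAddCommGroup F] [NormedSpace ℂ F] {p : ENNReal} [Fact (1 ≤ p)] (g : 𝓢(E, ℂ))
    {u : E → F} (hu : MemLp u p μ) : Integrable (fun x => g x • u x) μ := by
  have := ENNReal.HolderConjugate.inv_one_sub_inv' (Fact.out : 1 ≤ p)
  exact memLp_one_iff_integrable.1 (hu.smul (g.memLp (1 - p⁻¹)⁻¹ μ))

section Derivative

variable {F : Type*} [NormedAddCommGroup F] [NormedSpace ℂ F]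

theorem fourier_iterate_lineDerivOp_one (n : ℕ) (T : 𝓢'(ℝ, F)) :
    𝓕 ((∂_{(1 : ℝ)})^[n] T) = smulLeftCLM F (fun ξ : ℝ => (2 * π * I * ξ) ^ n) (𝓕 T) := by
  induction n with
  | zero => simp
  | succ n ih =>
    rw [Function.iterate_succ_apply', fourier_lineDerivOp_eq, ih,
      smulLeftCLM_smulLeftCLM_apply (by fun_prop) (by fun_prop), ← smul_apply,
      ← smulLeftCLM_smul (by fun_prop)]
    congr 2 with ξ
    simp only [Pi.smul_apply, Pi.mul_apply, RCLike.inner_apply, conj_trivial, one_mul,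
      smul_eq_mul]
    ring

variable [CompleteSpace F] {p : ENNReal} [Fact (1 ≤ p)]

theorem toTemperedDistribution_toLp_deriv {u : ℝ → F} (hu : Differentiable ℝ u)
    (hup : MemLp u p) (hu'p : MemLp (deriv u) p) :
    Lp.toTemperedDistribution (hu'p.toLp (deriv u)) =
      ∂_{(1 : ℝ)} (Lp.toTemperedDistribution (hup.toLp u)) := by
  ext g
  simp only [lineDerivOp_apply_apply, Lp.toTemperedDistribution_apply]
  rw [integral_congr_ae (hu'p.coeFn_toLp.mono fun x hx => congrArg (g x • ·) hx),
    integral_congr_ae (hup.coeFn_toLp.mono fun x hx => congrArg ((-∂_{(1 : ℝ)} g) x • ·) hx)]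
  have hg' (x : ℝ) : (∂_{(1 : ℝ)} g) x = deriv g x := rfl
  simp only [neg_apply, hg', neg_smul, integral_neg]
  exact integral_bilinear_hasDerivAt_right_eq_neg_left_of_integrable
    (L := ContinuousLinearMap.lsmul ℝ ℂ) (fun x _ => g.hasDerivAt x) (fun x _ => (hu x).hasDerivAt)
    (g.integrable_smul_of_memLp hu'p) ((SchwartzMap.derivCLM ℝ ℂ g).integrable_smul_of_memLp hup)
    (g.integrable_smul_of_memLp hup)

theorem toTemperedDistribution_toLp_iteratedDeriv {n : ℕ} {f : ℝ → F} (hf : ContDiff ℝ n f)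
    (hfp : ∀ k ≤ n, MemLp (iteratedDeriv k f) p) :
    Lp.toTemperedDistribution ((hfp n le_rfl).toLp _) =
      (∂_{(1 : ℝ)})^[n] (Lp.toTemperedDistribution ((hfp 0 n.zero_le).toLp _)) := by
  suffices ∀ k (hk : k ≤ n), Lp.toTemperedDistribution ((hfp k hk).toLp _) =
      (∂_{(1 : ℝ)})^[k] (Lp.toTemperedDistribution ((hfp 0 n.zero_le).toLp _)) from this n le_rfl
  intro k hk
  induction k with
  | zero => rfl
  | succ k ih =>
    have hdiff := hf.differentiable_iteratedDeriv k (by exact_mod_cast hk)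
    rw [Function.iterate_succ_apply', ← ih (by omega), ← toTemperedDistribution_toLp_deriv hdiff]
    · congr 1
      exact MemLp.toLp_congr _ _ (.of_forall fun x => by rw [iteratedDeriv_succ])
    · simpa only [iteratedDeriv_succ] using hfp (k + 1) hk

end Derivative

theorem fourier_toLp_iteratedDeriv {F : Type*} [NormedAddCommGroup F] [InnerProductSpace ℂ F]
    [CompleteSpace F] {n : ℕ} {f : ℝ → F} (hf : ContDiff ℝ n f)
    (hf2 : ∀ k ≤ n, MemLp (iteratedDeriv k f) 2) :
    (𝓕 ((hf2 n le_rfl).toLp _) : Lp F 2 (volume : Measure ℝ)) =ᵐ[volume] fun ξ =>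
      (2 * π * I * ξ) ^ n • (𝓕 ((hf2 0 n.zero_le).toLp _) : Lp F 2 (volume : Measure ℝ)) ξ := by
  set G : Lp F 2 (volume : Measure ℝ) := 𝓕 ((hf2 n le_rfl).toLp _)
  set Φ : Lp F 2 (volume : Measure ℝ) := 𝓕 ((hf2 0 n.zero_le).toLp _)
  have hp : (fun ξ : ℝ => (2 * π * I * ξ) ^ n).HasTemperateGrowth := by fun_prop
  have hdistrib : Lp.toTemperedDistribution G =
      smulLeftCLM F (fun ξ : ℝ => (2 * π * I * ξ) ^ n) (Lp.toTemperedDistribution Φ) := by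
    rw [← Lp.fourier_toTemperedDistribution_eq, ← Lp.fourier_toTemperedDistribution_eq,
      toTemperedDistribution_toLp_iteratedDeriv hf hf2, fourier_iterate_lineDerivOp_one]
  refine ae_eq_of_integral_contDiff_smul_eq ((Lp.memLp G).locallyIntegrable one_le_two)
    (((Lp.memLp Φ).locallyIntegrable one_le_two).continuous_smul (by fun_prop))
    fun φ hφ hφc => ?_
  let ψ : 𝓢(ℝ, ℂ) :=
    (hφc.comp_left Complex.ofReal_zero).toSchwartzMap (Complex.ofRealCLM.contDiff.comp hφ)
  have hψ (x : ℝ) : ψ x = (φ x : ℂ) := rfl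
  have hpair := congrArg (· ψ) hdistrib
  simp only [Lp.toTemperedDistribution_apply, smulLeftCLM_apply_apply,
    SchwartzMap.smulLeftCLM_apply_apply hp] at hpair
  convert hpair using 3 with x x
  · rw [hψ, Complex.coe_smul]
  · rw [hψ, smul_assoc, Complex.coe_smul, smul_comm]

theorem Real.fourier_eq_integral_mul_cexp (g : ℝ → ℂ) (ξ : ℝ) :
    𝓕 g ξ = ∫ x : ℝ, g x * cexp (-(2 * π * I * x * ξ)) := by
  rw [Real.fourier_real_eq_integral_exp_smul]
  congr 1 with x
  rw [smul_eq_mul, mul_comm]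
  push_cast
  ring_nf

-- `ftilde` and `gtilde` are pinned down by the Plancherel identity against the Fourier integrals
-- of all `g ∈ L¹ ∩ L²`.
/-- If `f` is `n` times continuously differentiable with all derivatives `f^{(k)}`, `k ≤ n`,
square-integrable, then the Fourier–Plancherel transform of `f^{(n)}` agrees almost everywhere
with `ξ ↦ (2πiξ)^n f̃(ξ)`; in particular the latter function is square-integrable.
Here the Fourier–Plancherel transforms `ftilde` of `f` and `gtilde` of `f^{(n)}` are
characterized by being at `L²`-distance `‖f - g‖₂` (resp. `‖f^{(n)} - g‖₂`) from the Fourier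
integral of any `g ∈ L¹ ∩ L²`. -/
theorem plancherel_iteratedDeriv
    (n : ℕ) (f ftilde gtilde : ℝ → ℂ)
    (hf : ContDiff ℝ n f)
    (hL2 : ∀ k ≤ n, MemLp (iteratedDeriv k f) 2 (volume : Measure ℝ))
    (hftm : AEStronglyMeasurable ftilde (volume : Measure ℝ))
    (hfchar : ∀ g : ℝ → ℂ, Integrable g → MemLp g 2 (volume : Measure ℝ) →
      eLpNorm (fun ξ : ℝ =>
          ftilde ξ - ∫ x : ℝ, g x * Complex.exp (-(2 * π * I * x * ξ)))
        2 (volume : Measure ℝ)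
      = eLpNorm (fun x : ℝ => f x - g x) 2 (volume : Measure ℝ))
    (hgtm : AEStronglyMeasurable gtilde (volume : Measure ℝ))
    (hgchar : ∀ g : ℝ → ℂ, Integrable g → MemLp g 2 (volume : Measure ℝ) →
      eLpNorm (fun ξ : ℝ =>
          gtilde ξ - ∫ x : ℝ, g x * Complex.exp (-(2 * π * I * x * ξ)))
        2 (volume : Measure ℝ)
      = eLpNorm (fun x : ℝ => iteratedDeriv n f x - g x) 2 (volume : Measure ℝ)) :
    (∀ᵐ ξ : ℝ ∂(volume : Measure ℝ),
        gtilde ξ = (2 * π * I * ξ) ^ n * ftilde ξ)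
    ∧ MemLp (fun ξ : ℝ => (2 * π * I * ξ) ^ n * ftilde ξ) 2 (volume : Measure ℝ) := by
  have hft := ae_eq_fourier_of_forall_eLpNorm_sub_fourier_eq (hL2 0 n.zero_le) hftm
    fun g hg hg2 => by
      simpa only [← Real.fourier_eq_integral_mul_cexp, iteratedDeriv_zero] using hfchar g hg hg2
  have hgt := ae_eq_fourier_of_forall_eLpNorm_sub_fourier_eq (hL2 n le_rfl) hgtm
    fun g hg hg2 => by simpa only [← Real.fourier_eq_integral_mul_cexp] using hgchar g hg hg2
  have hmul : (fun ξ : ℝ => (2 * π * I * ξ) ^ n * ftilde ξ) =ᵐ[volume]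
      (𝓕 ((hL2 n le_rfl).toLp _) : Lp ℂ 2 (volume : Measure ℝ)) := by
    filter_upwards [hft, fourier_toLp_iteratedDeriv hf hL2] with ξ hfξ hmulξ
    rw [hmulξ, hfξ, smul_eq_mul]
  exact ⟨hgt.trans hmul.symm, (Lp.memLp _).ae_eq hmul.symm⟩
end

section
/- Let n₀, n be integers with n ≥ |n₀| and n ≡ n₀ (mod 2), and let 0 ≤ k, k′ ≤ n with k ≠ k′. Then ∫_{SU(2)} ẽ_{n,k}^{n₀}(κ) · conj(ẽ_{n,k′}^{n₀}(κ)) dκ = 0; that is, the functions ẽ_{n,0}^{n₀}, …, ẽ_{n,n}^{n₀} are pairwise orthogonal in L²(SU(2), dκ). -/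
open MeasureTheory Real

/-- The (Borel) measurable space structure on `2 × 2` complex matrices. -/
noncomputable instance : MeasurableSpace (Matrix (Fin 2) (Fin 2) ℂ) :=
  inferInstanceAs (MeasurableSpace (Fin 2 → Fin 2 → ℂ))

/-- The spherical harmonic `ẽ_{n,k}^{n₀}` on `SU(2)`, expressed in the first-row coordinates
`z₁ = κ₀₀`, `z₂ = κ₀₁`.  Summands with `j > (n+n₀)/2` or `k - j > (n-n₀)/2` vanish since the
corresponding binomial coefficient is `0`. -/
noncomputable def etilde (n₀ n : ℤ) (k : ℕ)
    (κ : Matrix.specialUnitaryGroup (Fin 2) ℂ) : ℂ :=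
  (n.toNat.choose k : ℂ)⁻¹ *
    ∑ j ∈ Finset.range (k + 1),
      (-1 : ℂ) ^ (k - j) * (((n + n₀) / 2).toNat.choose j : ℂ) *
        (((n - n₀) / 2).toNat.choose (k - j) : ℂ) *
        ((κ : Matrix (Fin 2) (Fin 2) ℂ) 0 0) ^ (((n + n₀) / 2).toNat - j) *
        ((κ : Matrix (Fin 2) (Fin 2) ℂ) 0 1) ^ j *
        (starRingEnd ℂ ((κ : Matrix (Fin 2) (Fin 2) ℂ) 0 0)) ^ (k - j) *
        (starRingEnd ℂ ((κ : Matrix (Fin 2) (Fin 2) ℂ) 0 1)) ^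
          (((n - n₀) / 2).toNat - (k - j))

/-!
Right translation by the diagonal element `diag(u, ū)`, `|u| = 1`, sends `z₁ ↦ z₁ u` and
`z₂ ↦ z₂ ū`, so `ẽ_{n,k}^{n₀}` is an eigenfunction with eigenvalue `u^(a+b) ū^(2k)`, where
`a = (n+n₀)/2` and `b = (n-n₀)/2`. Hence `ẽ_{n,k} · conj ẽ_{n,k'}` is multiplied by
`ū^(2k) u^(2k')`, and for `k ≠ k'` one can pick `u` making this factor `-1`. A left-invariant
finite measure on a group is also right-invariant, so the integral equals its own negative.
-/

open ComplexConjugate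

section InvariantMeasure

variable {G : Type*} [Group G] [MeasurableSpace G] [MeasurableMul₂ G] [MeasurableInv G]

theorem MeasureTheory.Measure.inv_eq_self_of_isMulLeftInvariant (μ : Measure G)
    [IsFiniteMeasure μ] [μ.IsMulLeftInvariant] : μ.inv = μ := by
  -- `μ univ • μ.inv` is the second marginal of the image of `μ × μ` under the
  -- measure-preserving map `(x, y) ↦ (y x, x⁻¹)`
  have key : μ Set.univ • μ.inv = μ Set.univ • μ := by
    calc μ Set.univ • μ.inv = ((μ.prod μ).map Prod.fst).map Inv.inv := by
          rw [Measure.map_fst_prod, Measure.map_smul]; rfl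
      _ = ((μ.prod μ).map (fun z : G × G => (z.2 * z.1, z.1⁻¹))).map Prod.snd := by
          rw [Measure.map_map measurable_inv measurable_fst,
            Measure.map_map measurable_snd (by fun_prop)]
          rfl
      _ = μ Set.univ • μ := by
          rw [(measurePreserving_mul_prod_inv μ μ).map_eq, Measure.map_snd_prod]
  rcases eq_zero_or_neZero μ with rfl | hμ
  · simp [Measure.inv]
  ext s
  have hs := congrArg (· s) key
  simp only [Measure.smul_apply, smul_eq_mul] at hs
  exact (ENNReal.mul_right_inj (by simp [hμ.ne]) (measure_ne_top μ Set.univ)).mp hs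

theorem MeasureTheory.Measure.isMulRightInvariant_of_isMulLeftInvariant (μ : Measure G)
    [IsFiniteMeasure μ] [μ.IsMulLeftInvariant] : μ.IsMulRightInvariant :=
  μ.inv_eq_self_of_isMulLeftInvariant ▸ Measure.inv.instIsMulRightInvariant

end InvariantMeasure

local notation "SU₂" => Matrix.specialUnitaryGroup (Fin 2) ℂ

instance : BorelSpace (Matrix (Fin 2) (Fin 2) ℂ) :=
  inferInstanceAs (BorelSpace (Fin 2 → Fin 2 → ℂ))

instance : SecondCountableTopology (Matrix (Fin 2) (Fin 2) ℂ) :=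
  inferInstanceAs (SecondCountableTopology (Fin 2 → Fin 2 → ℂ))

instance : SecondCountableTopology SU₂ :=
  inferInstanceAs (SecondCountableTopology (SU₂ : Set (Matrix (Fin 2) (Fin 2) ℂ)))

instance : ContinuousInv SU₂ :=
  ⟨(continuous_star.comp continuous_subtype_val).subtype_mk _⟩

def diagCircle (u : Circle) : SU₂ :=
  ⟨Matrix.diagonal ![(u : ℂ), conj (u : ℂ)], by
    have hu : (u : ℂ) * conj (u : ℂ) = 1 := by simp [Complex.mul_conj]
    refine Matrix.mem_specialUnitaryGroup_iff.mpr ⟨Matrix.mem_unitaryGroup_iff.mpr ?_, ?_⟩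
    · rw [Matrix.star_eq_conjTranspose, Matrix.diagonal_conjTranspose,
        Matrix.diagonal_mul_diagonal, ← Matrix.diagonal_one]
      congr 1
      ext i
      fin_cases i <;> simp [hu, mul_comm]
    · simp [Matrix.det_diagonal, Fin.prod_univ_two, hu]⟩

theorem coe_mul_diagCircle_apply (κ : SU₂) (u : Circle) (i j : Fin 2) :
    ((κ * diagCircle u : SU₂) : Matrix (Fin 2) (Fin 2) ℂ) i j =
      (κ : Matrix (Fin 2) (Fin 2) ℂ) i j * ![(u : ℂ), conj (u : ℂ)] j :=
  Matrix.mul_diagonal _ _ _ _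

theorem exists_conj_pow_mul_pow_eq_neg_one {m m' : ℕ} (h : m ≠ m') :
    ∃ u : Circle, conj (u : ℂ) ^ m * (u : ℂ) ^ m' = -1 := by
  refine ⟨Circle.exp (π / ((m' : ℝ) - m)), ?_⟩
  have hmm' : (m' : ℝ) - m ≠ 0 := sub_ne_zero.mpr (by exact_mod_cast h.symm)
  rw [← Circle.coe_inv_eq_conj, ← Circle.coe_pow, ← Circle.coe_pow, ← Circle.coe_mul,
    ← Circle.exp_neg, ← Circle.exp_natCast_mul, ← Circle.exp_natCast_mul, ← Circle.exp_add,
    show (m : ℝ) * -(π / (m' - m)) + m' * (π / (m' - m)) = π by field_simp; ring,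
    Circle.coe_exp, Complex.exp_pi_mul_I]

theorem etilde_mul_diagCircle (n₀ n : ℤ) (k : ℕ) (κ : SU₂) (u : Circle) :
    etilde n₀ n k (κ * diagCircle u) =
      (u : ℂ) ^ (((n + n₀) / 2).toNat + ((n - n₀) / 2).toNat) * conj (u : ℂ) ^ (2 * k) *
        etilde n₀ n k κ := by
  have hu : (u : ℂ) * conj (u : ℂ) = 1 := by simp [Complex.mul_conj]
  simp only [etilde, coe_mul_diagCircle_apply, Matrix.cons_val_zero, Matrix.cons_val_one,
    Matrix.cons_val_fin_one, map_mul, Complex.conj_conj, Finset.mul_sum]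
  generalize ((n + n₀) / 2).toNat = a, ((n - n₀) / 2).toNat = b
  generalize (κ : Matrix (Fin 2) (Fin 2) ℂ) 0 0 = z₁, (κ : Matrix (Fin 2) (Fin 2) ℂ) 0 1 = z₂
  refine Finset.sum_congr rfl fun j hj => ?_
  obtain ⟨l, rfl⟩ : ∃ l, k = j + l := ⟨k - j, by simp at hj; omega⟩
  -- the summands in which a truncated subtraction would occur carry a vanishing binomial
  rcases lt_or_ge a j with hja | hja
  · simp [Nat.choose_eq_zero_of_lt hja]
  rcases lt_or_ge b l with hlb | hlb
  · simp [Nat.choose_eq_zero_of_lt hlb]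
  obtain ⟨a, rfl⟩ := Nat.exists_eq_add_of_le hja
  obtain ⟨b, rfl⟩ := Nat.exists_eq_add_of_le hlb
  simp only [Nat.add_sub_cancel_left]
  have hul : ((u : ℂ) * conj (u : ℂ)) ^ (j + l) = 1 := by rw [hu, one_pow]
  linear_combination -((-1 : ℂ) ^ l * ((j + a).choose j : ℂ) * ((l + b).choose l : ℂ) *
    (n.toNat.choose (j + l) : ℂ)⁻¹ * z₁ ^ a * z₂ ^ j * conj z₁ ^ l * conj z₂ ^ b *
    (u : ℂ) ^ (a + b) * conj (u : ℂ) ^ (j + l)) * hul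

theorem etilde_mul_conj_etilde_mul_diagCircle (n₀ n : ℤ) (k k' : ℕ) (κ : SU₂) (u : Circle) :
    etilde n₀ n k (κ * diagCircle u) * conj (etilde n₀ n k' (κ * diagCircle u)) =
      conj (u : ℂ) ^ (2 * k) * (u : ℂ) ^ (2 * k') *
        (etilde n₀ n k κ * conj (etilde n₀ n k' κ)) := by
  have hu : ((u : ℂ) * conj (u : ℂ)) ^ (((n + n₀) / 2).toNat + ((n - n₀) / 2).toNat) = 1 := by
    simp [Complex.mul_conj]
  simp only [etilde_mul_diagCircle, map_mul, map_pow, Complex.conj_conj]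
  linear_combination conj (u : ℂ) ^ (2 * k) * (u : ℂ) ^ (2 * k') *
    (etilde n₀ n k κ * conj (etilde n₀ n k' κ)) * hu

theorem integral_etilde_mul_conj_etilde_eq_zero_general
    (n₀ n : ℤ)
    (k k' : ℕ) (hkk' : k ≠ k')
    (μ : Measure (Matrix.specialUnitaryGroup (Fin 2) ℂ))
    [IsProbabilityMeasure μ] [μ.IsMulLeftInvariant] :
    (∫ κ, etilde n₀ n k κ * starRingEnd ℂ (etilde n₀ n k' κ) ∂μ) = 0 := by
  have := μ.isMulRightInvariant_of_isMulLeftInvariant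
  obtain ⟨u, hu⟩ := exists_conj_pow_mul_pow_eq_neg_one (m := 2 * k) (m' := 2 * k') (by omega)
  refine integral_eq_zero_of_mul_right_eq_neg (g := diagCircle u) fun κ => ?_
  rw [etilde_mul_conj_etilde_mul_diagCircle, hu, neg_one_mul]

/-- Orthogonality of the spherical harmonics `ẽ_{n,k}^{n₀}`, `0 ≤ k ≤ n`, in `L²(SU(2))`
with respect to the Haar probability measure (i.e. any left-invariant Borel probability
measure): for `k ≠ k′`, `∫_{SU(2)} ẽ_{n,k}^{n₀} · conj(ẽ_{n,k′}^{n₀}) dκ = 0`. -/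
theorem integral_etilde_mul_conj_etilde_eq_zero
    (n₀ n : ℤ) (hn : |n₀| ≤ n) (hpar : (2 : ℤ) ∣ (n - n₀))
    (k k' : ℕ) (hk : (k : ℤ) ≤ n) (hk' : (k' : ℤ) ≤ n) (hkk' : k ≠ k')
    (μ : Measure (Matrix.specialUnitaryGroup (Fin 2) ℂ))
    [IsProbabilityMeasure μ] [μ.IsMulLeftInvariant] :
    (∫ κ, etilde n₀ n k κ * starRingEnd ℂ (etilde n₀ n k' κ) ∂μ) = 0 :=
  integral_etilde_mul_conj_etilde_eq_zero_general n₀ n k k' hkk' μ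
end

section
/- Let n₀ ∈ ℤ, μ ∈ ℝ, and let n be an integer with n ≥ |n₀| and n ≡ n₀ (mod 2); set M = (n − |n₀|)/2 and define m: ℝ → ℂ by m(y) = i^{−n₀} · ∏_{k=0}^{M−1} (1 − i(2y+μ) + |n₀|/2 + k) / (1 + i(2y+μ) + |n₀|/2 + k). Then: (a) |m(y)| = 1 for all y ∈ ℝ; (b) m′(y)/m(y) = −4i Σ_{k=0}^{M−1} (1 + |n₀|/2 + k) / ((2y+μ)² + (1 + |n₀|/2 + k)²) for all y ∈ ℝ; (c) if n ≥ |n₀| + 2 then |m′(y)| ≤ 4·(2/(|n₀|+2) + log(n/(|n₀|+2))) for all y ∈ ℝ (and m′ ≡ 0 if n = |n₀|). -/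
/-!
Each factor of the product is `conj w / w` with `w = c + i(2y+μ)` and `c = 1 + |n₀|/2 + k > 0`,
so it has modulus one, and its logarithmic derivative is
`-2i / conj w - 2i / w = -4i c / |w|²`. Hence `|m'| = |m'/m| = 4 ∑ c/|w|² ≤ 4 ∑ 1/c`, and the
last sum is at most its first term plus `∫ dx/x` over `[1 + |n₀|/2, n/2]`.
-/

open Complex ComplexConjugate

noncomputable def cayley (c μ y : ℝ) : ℂ :=
  (c - I * ↑(2 * y + μ)) / (c + I * ↑(2 * y + μ))

section Cayley
variable {c : ℝ} (μ y : ℝ)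

theorem ofReal_add_I_mul_ne_zero (hc : c ≠ 0) (t : ℝ) : (c : ℂ) + I * t ≠ 0 := by
  intro h
  simpa [hc] using congrArg re h

theorem ofReal_sub_I_mul_eq_conj (t : ℝ) : (c : ℂ) - I * t = conj ((c : ℂ) + I * t) := by
  simp [sub_eq_add_neg]

theorem ofReal_sub_I_mul_ne_zero (hc : c ≠ 0) (t : ℝ) : (c : ℂ) - I * t ≠ 0 := by
  rw [ofReal_sub_I_mul_eq_conj, map_ne_zero]
  exact ofReal_add_I_mul_ne_zero hc t

theorem ofReal_sub_I_mul_mul_add (t : ℝ) :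
    ((c : ℂ) - I * t) * (c + I * t) = ((t ^ 2 + c ^ 2 : ℝ) : ℂ) := by
  push_cast
  linear_combination (-(t : ℂ) ^ 2) * I_sq

theorem norm_cayley (hc : c ≠ 0) : ‖cayley c μ y‖ = 1 := by
  rw [cayley, norm_div, ofReal_sub_I_mul_eq_conj, norm_conj,
    div_self (norm_ne_zero_iff.mpr (ofReal_add_I_mul_ne_zero hc _))]

theorem hasDerivAt_ofReal_affine : HasDerivAt (fun y : ℝ => ((2 * y + μ : ℝ) : ℂ)) 2 y := by
  simpa using (((hasDerivAt_id y).const_mul 2).add_const μ).ofReal_comp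

theorem differentiableAt_cayley (hc : c ≠ 0) : DifferentiableAt ℝ (cayley c μ) y :=
  (((hasDerivAt_ofReal_affine μ y).const_mul I).const_sub (c : ℂ)).differentiableAt.div
    (((hasDerivAt_ofReal_affine μ y).const_mul I).const_add (c : ℂ)).differentiableAt
    (ofReal_add_I_mul_ne_zero hc _)

theorem logDeriv_cayley (hc : c ≠ 0) :
    logDeriv (cayley c μ) y = -4 * I * c / ((2 * y + μ) ^ 2 + c ^ 2 : ℝ) := by
  have hnum := ((hasDerivAt_ofReal_affine μ y).const_mul I).const_sub (c : ℂ)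
  have hden := ((hasDerivAt_ofReal_affine μ y).const_mul I).const_add (c : ℂ)
  have hnum0 := ofReal_sub_I_mul_ne_zero hc (2 * y + μ)
  have hden0 := ofReal_add_I_mul_ne_zero hc (2 * y + μ)
  unfold cayley
  rw [logDeriv_div y hnum0 hden0 hnum.differentiableAt hden.differentiableAt, logDeriv_apply,
    logDeriv_apply, hnum.deriv, hden.deriv, div_sub_div _ _ hnum0 hden0,
    ofReal_sub_I_mul_mul_add]
  congr 1
  push_cast
  ring

theorem norm_prod_cayley {ι : Type*} (s : Finset ι) {c : ι → ℝ} (hc : ∀ i ∈ s, c i ≠ 0) :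
    ‖∏ i ∈ s, cayley (c i) μ y‖ = 1 := by
  rw [norm_prod]
  exact Finset.prod_eq_one fun i hi => norm_cayley μ y (hc i hi)

theorem logDeriv_prod_cayley {ι : Type*} (s : Finset ι) {c : ι → ℝ} (hc : ∀ i ∈ s, c i ≠ 0) :
    logDeriv (fun y => ∏ i ∈ s, cayley (c i) μ y) y =
      -4 * I * ((∑ i ∈ s, c i / ((2 * y + μ) ^ 2 + c i ^ 2) : ℝ) : ℂ) := by
  have hne : ∀ i ∈ s, cayley (c i) μ y ≠ 0 := fun i hi =>
    norm_ne_zero_iff.mp (by rw [norm_cayley μ y (hc i hi)]; exact one_ne_zero)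
  rw [logDeriv_prod hne fun i hi => differentiableAt_cayley μ y (hc i hi), ofReal_sum,
    Finset.mul_sum]
  refine Finset.sum_congr rfl fun i hi => ?_
  rw [logDeriv_cayley μ y (hc i hi)]
  push_cast
  ring

end Cayley

theorem div_sq_add_sq_le_inv {c : ℝ} (hc : 0 < c) (t : ℝ) : c / (t ^ 2 + c ^ 2) ≤ c⁻¹ := by
  rw [div_le_iff₀ (by positivity), inv_mul_eq_div, le_div_iff₀ hc]
  nlinarith [sq_nonneg t]

theorem sum_range_succ_inv_add_le_log {b : ℝ} (hb : 0 < b) (M : ℕ) :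
    ∑ k ∈ Finset.range (M + 1), (b + k)⁻¹ ≤ b⁻¹ + Real.log ((b + M) / b) := by
  have hint : ∑ k ∈ Finset.range M, (b + ↑(k + 1))⁻¹ ≤ ∫ x in b..b + M, x⁻¹ :=
    (inv_antitoneOn_Icc_right hb).sum_le_integral
  rw [integral_inv (by simp [Set.uIcc_of_le, hb.not_ge])] at hint
  rw [Finset.sum_range_succ', add_comm]
  simpa using hint

/-- Properties of the unitary-axis value of the normalized local intertwining operator at a
complex place on the `K`-type of degree `n`:
`m(y) = i^{-n₀} ∏_{k=0}^{M-1} (1 - i(2y+μ) + |n₀|/2 + k)/(1 + i(2y+μ) + |n₀|/2 + k)`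
with `n = |n₀| + 2M` has modulus one, its logarithmic derivative is
`-4i Σ_{k=0}^{M-1} (1 + |n₀|/2 + k)/((2y+μ)² + (1 + |n₀|/2 + k)²)`, and its derivative is
bounded by `4(2/(|n₀|+2) + log(n/(|n₀|+2)))` when `n ≥ |n₀| + 2` (and vanishes when
`n = |n₀|`). -/
theorem complex_place_intertwining_scalar
    (n₀ n : ℤ) (μ : ℝ) (M : ℕ) (hM : n = |n₀| + 2 * M)
    (m : ℝ → ℂ)
    (hm : ∀ y : ℝ, m y = Complex.I ^ (-n₀) *
      ∏ k ∈ Finset.range M,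
        (((1 : ℂ) - Complex.I * (2 * (y : ℂ) + (μ : ℂ)) + ((|n₀| : ℤ) : ℂ) / 2 + (k : ℂ)) /
         ((1 : ℂ) + Complex.I * (2 * (y : ℂ) + (μ : ℂ)) + ((|n₀| : ℤ) : ℂ) / 2 + (k : ℂ)))) :
    (∀ y : ℝ, ‖m y‖ = 1)
    ∧ (∀ y : ℝ, deriv m y / m y =
        (-4) * Complex.I *
          ((∑ k ∈ Finset.range M,
              (1 + (|n₀| : ℝ) / 2 + (k : ℝ)) /
                ((2 * y + μ) ^ 2 + (1 + (|n₀| : ℝ) / 2 + (k : ℝ)) ^ 2) : ℝ) : ℂ))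
    ∧ (|n₀| + 2 ≤ n → ∀ y : ℝ,
        ‖deriv m y‖
          ≤ 4 * (2 / ((|n₀| : ℝ) + 2) + Real.log ((n : ℝ) / ((|n₀| : ℝ) + 2))))
    ∧ (n = |n₀| → ∀ y : ℝ, deriv m y = 0) := by
  set b : ℝ := 1 + |(n₀ : ℝ)| / 2
  have hb : 0 < b := by positivity
  have hc : ∀ k ∈ Finset.range M, b + k ≠ 0 := fun k _ => by positivity
  have hm' : m = fun y => I ^ (-n₀) * ∏ k ∈ Finset.range M, cayley (b + k) μ y := by
    funext y
    rw [hm, ← ofReal_intCast, Int.cast_abs]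
    congr 1
    refine Finset.prod_congr rfl fun k _ => ?_
    simp only [cayley, b]
    push_cast
    ring
  have hnorm (y : ℝ) : ‖m y‖ = 1 := by
    rw [hm', norm_mul, norm_zpow, norm_I, one_zpow, one_mul, norm_prod_cayley μ y _ hc]
  have hlog (y : ℝ) : deriv m y / m y = -4 * I *
      ((∑ k ∈ Finset.range M, (b + k) / ((2 * y + μ) ^ 2 + (b + k) ^ 2) : ℝ) : ℂ) := by
    rw [← logDeriv_apply, hm', logDeriv_const_mul y _ (zpow_ne_zero _ I_ne_zero),
      logDeriv_prod_cayley μ y _ hc]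
  refine ⟨hnorm, hlog, fun hn y => ?_, fun hn y => ?_⟩
  · obtain ⟨M', rfl⟩ : ∃ M', M = M' + 1 := ⟨M - 1, by omega⟩
    have hnb : (n : ℝ) / (|(n₀ : ℝ)| + 2) = (b + M') / b := by
      rw [hM]; push_cast; field_simp; ring
    rw [hnb, show 2 / (|(n₀ : ℝ)| + 2) = b⁻¹ by field_simp; ring]
    calc ‖deriv m y‖ = ‖deriv m y / m y‖ := by rw [norm_div, hnorm, div_one]
      _ = 4 * ∑ k ∈ Finset.range (M' + 1), (b + k) / ((2 * y + μ) ^ 2 + (b + k) ^ 2) := by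
        rw [hlog, norm_mul, norm_real, Real.norm_of_nonneg (by positivity)]
        norm_num
      _ ≤ 4 * ∑ k ∈ Finset.range (M' + 1), (b + k)⁻¹ := by
        gcongr with k
        exact div_sq_add_sq_le_inv (by positivity) _
      _ ≤ 4 * (b⁻¹ + Real.log ((b + M') / b)) := by
        gcongr
        exact sum_range_succ_inv_add_le_log hb M'
  · obtain rfl : M = 0 := by omega
    simp [hm']
end

section
/- Let n₀ ∈ {0, 1}, μ ∈ ℝ, and let n be an integer with |n| ≥ n₀ and |n| ≡ n₀ (mod 2); set M = (|n| − n₀)/2 and define m: ℝ → ℂ by m(y) = (−1)^{(|n|−n)/2} · ∏_{k=0}^{M−1} (1 − i(2y+μ) + n₀ + 2k) / (1 + i(2y+μ) + n₀ + 2k). Then: (a) |m(y)| = 1 for all y ∈ ℝ; (b) if |n| ≥ n₀ + 2 then |m′(y)| ≤ 2·(2/(n₀+1) + log((|n|−1)/(n₀+1))) for all y ∈ ℝ (and m′ ≡ 0 if |n| = n₀). -/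
/-!
Each factor is `conj z / z` with `z = a + i t`, `a = n₀ + 1 + 2k > 0`, `t = 2y + μ`, so it has
modulus one, and its `y`-derivative `-4ai / z²` has norm `4a / (a² + t²) ≤ 4 / a`. By the
product rule, the derivative of a product of unimodular factors has norm at most the sum of the
norms of the derivatives of the factors, and `∑_{k<M} 2 / (n₀ + 1 + 2k)` is compared with
`2 / (n₀ + 1) + ∫ dx / x` over `[n₀ + 1, |n| - 1]`.
-/

open Complex Finset ComplexConjugate

theorem norm_deriv_prod_le_sum_of_norm_le_one {𝕜 𝔸 ι : Type*} [NontriviallyNormedField 𝕜]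
    [NormedCommRing 𝔸] [NormOneClass 𝔸] [NormedAlgebra 𝕜 𝔸] {s : Finset ι} {f : ι → 𝕜 → 𝔸}
    {f' : ι → 𝔸} {x : 𝕜} (hf : ∀ i ∈ s, HasDerivAt (f i) (f' i) x)
    (hle : ∀ i ∈ s, ‖f i x‖ ≤ 1) :
    ‖deriv (fun y => ∏ i ∈ s, f i y) x‖ ≤ ∑ i ∈ s, ‖f' i‖ := by
  classical
  rw [(HasDerivAt.fun_finsetProd hf).deriv]
  refine (norm_sum_le _ _).trans (sum_le_sum fun i _ => ?_)
  have hprod : ‖∏ j ∈ s.erase i, f j x‖ ≤ 1 :=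
    (Finset.norm_prod_le _ _).trans
      (prod_le_one (fun _ _ => norm_nonneg _) fun j hj => hle j (mem_of_mem_erase hj))
  calc ‖(∏ j ∈ s.erase i, f j x) • f' i‖ ≤ ‖∏ j ∈ s.erase i, f j x‖ * ‖f' i‖ := norm_smul_le _ _
    _ ≤ ‖f' i‖ := mul_le_of_le_one_left (norm_nonneg _) hprod

theorem Real.div_add_le_log_add_div {x h : ℝ} (hx : 0 < x) (hh : 0 < h) :
    h / (x + h) ≤ log ((x + h) / x) := by
  have := one_sub_inv_le_log_of_pos (show 0 < (x + h) / x by positivity)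
  rwa [inv_div, one_sub_div (by positivity), add_sub_cancel_left] at this

theorem Real.sum_range_succ_div_le_log {c h : ℝ} (hc : 0 < c) (hh : 0 < h) (M : ℕ) :
    ∑ k ∈ range (M + 1), h / (c + h * k) ≤ h / c + log ((c + h * M) / c) := by
  induction M with
  | zero => simp
  | succ M ih =>
    have hcM : 0 < c + h * M := by positivity
    have htel : log ((c + h * M) / c) + log ((c + h * M + h) / (c + h * M))
        = log ((c + h * (M + 1 : ℕ)) / c) := by
      rw [← log_mul (by positivity) (by positivity)]
      congr 1
      field_simp
      push_cast
      ring
    rw [sum_range_succ, ← htel, show c + h * (M + 1 : ℕ) = c + h * M + h by push_cast; ring]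
    linarith [div_add_le_log_add_div hcM hh]

namespace Complex

variable {a t : ℝ}

theorem ofReal_add_I_mul_ne_zero (ha : a ≠ 0) : (a : ℂ) + I * t ≠ 0 := by
  intro h
  exact ha (by simpa using congrArg re h)

theorem norm_ofReal_sub_I_mul_div_add_I_mul (ha : a ≠ 0) :
    ‖((a : ℂ) - I * t) / ((a : ℂ) + I * t)‖ = 1 := by
  have hconj : (a : ℂ) - I * t = conj ((a : ℂ) + I * t) := by simp [sub_eq_add_neg]
  rw [hconj, norm_div, norm_conj, div_self (norm_ne_zero_iff.2 (ofReal_add_I_mul_ne_zero ha))]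

theorem hasDerivAt_ofReal_sub_I_mul_div_add_I_mul {t : ℝ → ℝ} {t' y : ℝ} (ha : a ≠ 0)
    (ht : HasDerivAt t t' y) :
    HasDerivAt (fun y => ((a : ℂ) - I * t y) / ((a : ℂ) + I * t y))
      (-2 * a * t' * I / ((a : ℂ) + I * t y) ^ 2) y := by
  have hI : HasDerivAt (fun y => I * (t y : ℂ)) (I * t') y := ht.ofReal_comp.const_mul I
  refine ((hI.const_sub _).div (hI.const_add _) (ofReal_add_I_mul_ne_zero ha)).congr_deriv ?_
  ring_nf

theorem norm_mul_I_div_ofReal_add_I_mul_sq_le (ha : 0 < a) (t' : ℝ) :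
    ‖-2 * a * t' * I / ((a : ℂ) + I * t) ^ 2‖ ≤ 2 * |t'| / a := by
  have hsq : ‖(a : ℂ) + I * t‖ ^ 2 = a ^ 2 + t ^ 2 := by
    rw [mul_comm, norm_add_mul_I, Real.sq_sqrt (by positivity)]
  rw [norm_div, norm_pow, hsq, div_le_div_iff₀ (by positivity) ha]
  simp only [norm_mul, norm_neg, norm_ofNat, norm_real, Real.norm_eq_abs, norm_I, mul_one,
    abs_of_pos ha]
  nlinarith [abs_nonneg t', sq_nonneg t]

end Complex

/-- Properties of the unitary-axis value of the normalized local intertwining operator at a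
real place on the `SO(2)`-type of weight `n`:
`m(y) = (-1)^{(|n|-n)/2} ∏_{k=0}^{M-1} (1 - i(2y+μ) + n₀ + 2k)/(1 + i(2y+μ) + n₀ + 2k)`
with `|n| = n₀ + 2M`, `n₀ ∈ {0,1}`, has modulus one, and its derivative is bounded by
`2(2/(n₀+1) + log((|n|-1)/(n₀+1)))` when `|n| ≥ n₀ + 2` (and vanishes when `|n| = n₀`). -/
theorem real_place_intertwining_scalar
    (n₀ : ℤ) (hn₀ : n₀ = 0 ∨ n₀ = 1) (n : ℤ) (μ : ℝ) (M : ℕ) (hM : |n| = n₀ + 2 * M)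
    (m : ℝ → ℂ)
    (hm : ∀ y : ℝ, m y = (-1 : ℂ) ^ ((|n| - n) / 2) *
      ∏ k ∈ Finset.range M,
        (((1 : ℂ) - Complex.I * (2 * (y : ℂ) + (μ : ℂ)) + (n₀ : ℂ) + 2 * (k : ℂ)) /
         ((1 : ℂ) + Complex.I * (2 * (y : ℂ) + (μ : ℂ)) + (n₀ : ℂ) + 2 * (k : ℂ)))) :
    (∀ y : ℝ, ‖m y‖ = 1)
    ∧ (n₀ + 2 ≤ |n| → ∀ y : ℝ,
        ‖deriv m y‖
          ≤ 2 * (2 / ((n₀ : ℝ) + 1) + Real.log ((((|n| : ℤ) : ℝ) - 1) / ((n₀ : ℝ) + 1))))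
    ∧ (|n| = n₀ → ∀ y : ℝ, deriv m y = 0) := by
  set c : ℝ := n₀ + 1
  have hc : 0 < c := by rcases hn₀ with h | h <;> simp [c, h]
  have ha : ∀ k : ℕ, 0 < c + 2 * k := fun k => by positivity
  have hm' : m = fun y : ℝ => (-1 : ℂ) ^ ((|n| - n) / 2) * ∏ k ∈ range M,
      (((c + 2 * k : ℝ) : ℂ) - I * (2 * y + μ : ℝ)) /
        (((c + 2 * k : ℝ) : ℂ) + I * (2 * y + μ : ℝ)) := by
    funext y
    rw [hm]
    congr 1
    refine prod_congr rfl fun k _ => ?_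
    simp only [c]
    push_cast
    ring
  have hunit : ‖(-1 : ℂ) ^ ((|n| - n) / 2)‖ = 1 := by simp [norm_zpow]
  have hderiv : ∀ y, ‖deriv m y‖ ≤ ∑ k ∈ range M, 4 / (c + 2 * k) := by
    intro y
    have hlin : HasDerivAt (fun y : ℝ => 2 * y + μ) 2 y := by
      simpa using ((hasDerivAt_id y).const_mul 2).add_const μ
    rw [hm', deriv_const_mul_field, norm_mul, hunit, one_mul]
    refine (norm_deriv_prod_le_sum_of_norm_le_one
      (fun k _ => hasDerivAt_ofReal_sub_I_mul_div_add_I_mul (ha k).ne' hlin)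
      (fun k _ => (norm_ofReal_sub_I_mul_div_add_I_mul (ha k).ne').le)).trans
      (sum_le_sum fun k _ => ?_)
    exact (norm_mul_I_div_ofReal_add_I_mul_sq_le (ha k) 2).trans_eq (by rw [abs_two]; ring)
  refine ⟨fun y => ?_, fun hge y => ?_, fun heq y => ?_⟩
  · rw [hm', norm_mul, hunit, one_mul, norm_prod]
    exact prod_eq_one fun k _ => norm_ofReal_sub_I_mul_div_add_I_mul (ha k).ne'
  · obtain ⟨M, rfl⟩ : ∃ M', M = M' + 1 := ⟨M - 1, by omega⟩
    have hn : ((|n| : ℤ) : ℝ) - 1 = c + 2 * M := by rw [hM]; push_cast; ring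
    calc ‖deriv m y‖ ≤ ∑ k ∈ range (M + 1), 4 / (c + 2 * k) := hderiv y
      _ = 2 * ∑ k ∈ range (M + 1), 2 / (c + 2 * k) := by rw [mul_sum]; ring_nf
      _ ≤ 2 * (2 / c + Real.log ((c + 2 * M) / c)) := by
        gcongr
        exact Real.sum_range_succ_div_le_log hc two_pos M
      _ = _ := by rw [hn]
  · obtain rfl : M = 0 := by omega
    simpa using hderiv y
end

section
/- Let q > 1 and A ≥ 1 be real numbers and μ ∈ ℝ. Define m: ℝ → ℂ by m(y) = ((1 − q^{−1 + i(2y+μ)}) / (1 − q^{−1 − i(2y+μ)})) · A^{−i(2y+μ)}. Then |m(y)| = 1 for all y ∈ ℝ, and |m′(y)| ≤ 2·(log A + 2·log q/(1 − q^{−1})) for all y ∈ ℝ. -/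
/-!
Write `m y = R (2y + μ)` with `R τ = (1 - q^{-1+iτ}) / (1 - q^{-1-iτ}) · A^{-iτ}`. The denominator
of `R` is the complex conjugate of its numerator and `A^{-iτ}` is unimodular, so `|R| = 1`; hence
`|R'| = |R'/R|`, and the logarithmic derivative splits into a sum. The factor `A^{-iτ}` contributes
`-i log A`, and each factor `1 - w` with `w = q^{-1±iτ}` contributes `-w'/(1 - w)`, of modulus at
most `q⁻¹ log q / (1 - q⁻¹)`. The factor `2` comes from the chain rule.
-/

open Real Complex ComplexConjugate

section LogDeriv

variable {𝕜 𝕜' : Type*} [NontriviallyNormedField 𝕜] [NontriviallyNormedField 𝕜']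
  [NormedAlgebra 𝕜 𝕜'] {f : 𝕜 → 𝕜'} {x : 𝕜}

theorem norm_deriv_eq_norm_logDeriv (hf : ‖f x‖ = 1) : ‖deriv f x‖ = ‖logDeriv f x‖ := by
  rw [logDeriv_apply, norm_div, hf, div_one]

theorem logDeriv_one_sub (hf : f x ≠ 0) :
    logDeriv (fun x => 1 - f x) x = -(f x / (1 - f x)) * logDeriv f x := by
  rw [logDeriv_apply, logDeriv_apply, deriv_const_sub]
  field_simp

theorem norm_logDeriv_one_sub_le {r : ℝ} (hf : f x ≠ 0) (hfr : ‖f x‖ ≤ r) (hr : r < 1) :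
    ‖logDeriv (fun x => 1 - f x) x‖ ≤ r / (1 - r) * ‖logDeriv f x‖ := by
  have hsub : 1 - r ≤ ‖1 - f x‖ := by
    have := norm_sub_norm_le (1 : 𝕜') (f x)
    rw [norm_one] at this
    linarith
  rw [logDeriv_one_sub hf, norm_mul, norm_neg, norm_div]
  gcongr
  linarith [norm_nonneg (f x)]

theorem norm_logDeriv_one_sub_div_one_sub_mul_le {u v h : 𝕜 → 𝕜'} {r : ℝ}
    (hu : DifferentiableAt 𝕜 u x) (hv : DifferentiableAt 𝕜 v x) (hh : DifferentiableAt 𝕜 h x)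
    (hu0 : u x ≠ 0) (hv0 : v x ≠ 0) (hh0 : h x ≠ 0) (hur : ‖u x‖ ≤ r) (hvr : ‖v x‖ ≤ r)
    (hr : r < 1) :
    ‖logDeriv (fun x => (1 - u x) / (1 - v x) * h x) x‖
      ≤ r / (1 - r) * (‖logDeriv u x‖ + ‖logDeriv v x‖) + ‖logDeriv h x‖ := by
  have one_sub_ne {w : 𝕜'} (hw : ‖w‖ ≤ r) : 1 - w ≠ 0 := fun h1 => by
    rw [← sub_eq_zero.mp h1, norm_one] at hw
    linarith
  have hu1 := one_sub_ne hur
  have hv1 := one_sub_ne hvr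
  rw [logDeriv_mul (f := fun x => (1 - u x) / (1 - v x)) x (div_ne_zero hu1 hv1) hh0
      ((hu.const_sub 1).div (hv.const_sub 1) hv1) hh,
    logDeriv_div (f := fun x => 1 - u x) x hu1 hv1 (hu.const_sub 1) (hv.const_sub 1)]
  calc _ ≤ ‖logDeriv (fun x => 1 - u x) x‖ + ‖logDeriv (fun x => 1 - v x) x‖
          + ‖logDeriv h x‖ := (norm_add_le _ _).trans (by gcongr; exact norm_sub_le _ _)
    _ ≤ _ := by
      have := norm_logDeriv_one_sub_le hu0 hur hr
      have := norm_logDeriv_one_sub_le hv0 hvr hr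
      linarith

end LogDeriv

theorem Complex.conj_ofReal_cpow {c : ℝ} (hc : 0 ≤ c) (s : ℂ) :
    conj ((c : ℂ) ^ s) = (c : ℂ) ^ conj s := by
  have h := conj_cpow (c : ℂ) (conj s) (by simp [arg_ofReal_of_nonneg hc, pi_pos.ne])
  rw [conj_ofReal, conj_conj] at h
  exact h.symm

section ConstCpow

variable {𝕜 : Type*} [NontriviallyNormedField 𝕜] [NormedAlgebra 𝕜 ℂ] {c : ℂ} {g : 𝕜 → ℂ}
  {g' : ℂ} {x : 𝕜}

theorem Complex.hasDerivAt_const_cpow_comp (hc : c ≠ 0) (hg : HasDerivAt g g' x) :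
    HasDerivAt (fun x => c ^ g x) (c ^ g x * Complex.log c * g') x :=
  (hasStrictDerivAt_const_cpow (Or.inl hc)).hasDerivAt.comp x hg

theorem Complex.logDeriv_const_cpow (hc : c ≠ 0) (hg : HasDerivAt g g' x) :
    logDeriv (fun x => c ^ g x) x = Complex.log c * g' := by
  rw [logDeriv_apply, (hasDerivAt_const_cpow_comp hc hg).deriv]
  field_simp [cpow_ne_zero_iff.mpr (Or.inl hc)]

theorem Complex.norm_logDeriv_ofReal_cpow {c : ℝ} (hc : 0 < c) (hg : HasDerivAt g g' x) :
    ‖logDeriv (fun x => (c : ℂ) ^ g x) x‖ = |Real.log c| * ‖g'‖ := by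
  rw [logDeriv_const_cpow (ofReal_ne_zero.mpr hc.ne') hg, ← ofReal_log hc.le, norm_mul,
    norm_real, Real.norm_eq_abs]

end ConstCpow

theorem Complex.norm_one_sub_div_one_sub_conj {z : ℂ} (hz : z ≠ 1) :
    ‖(1 - z) / (1 - conj z)‖ = 1 := by
  have hconj : 1 - conj z = conj (1 - z) := by rw [map_sub, map_one]
  rw [hconj, norm_div, norm_conj, div_self (norm_ne_zero_iff.mpr (sub_ne_zero.mpr hz.symm))]

noncomputable def intertwiningRatio (q A τ : ℝ) : ℂ :=
  (1 - (q : ℂ) ^ (-1 + I * τ)) / (1 - (q : ℂ) ^ (-1 - I * τ)) * (A : ℂ) ^ (-(I * τ))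

section IntertwiningRatio

variable {q A : ℝ}

theorem norm_ofReal_cpow_neg_one_add_I_mul (hq : 0 < q) (τ : ℝ) :
    ‖(q : ℂ) ^ (-1 + I * τ)‖ = q⁻¹ := by
  simp [norm_cpow_eq_rpow_re_of_pos hq, rpow_neg_one]

theorem ofReal_cpow_neg_one_sub_I_mul (hq : 0 ≤ q) (τ : ℝ) :
    (q : ℂ) ^ (-1 - I * τ) = conj ((q : ℂ) ^ (-1 + I * τ)) := by
  rw [conj_ofReal_cpow hq]
  simp only [map_add, map_mul, map_neg, map_one, conj_I, conj_ofReal]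
  ring_nf

theorem norm_intertwiningRatio (hq : 1 < q) (hA : 0 < A) (τ : ℝ) :
    ‖intertwiningRatio q A τ‖ = 1 := by
  have hu : (q : ℂ) ^ (-1 + I * τ) ≠ 1 := fun h1 => by
    have := norm_ofReal_cpow_neg_one_add_I_mul (zero_lt_one.trans hq) τ
    rw [h1, norm_one] at this
    linarith [inv_lt_one_of_one_lt₀ hq]
  rw [intertwiningRatio, ofReal_cpow_neg_one_sub_I_mul (zero_le_one.trans hq.le), norm_mul,
    norm_one_sub_div_one_sub_conj hu, norm_cpow_eq_rpow_re_of_pos hA]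
  simp

theorem norm_logDeriv_intertwiningRatio_le (hq : 1 < q) (hA : 0 < A) (τ : ℝ) :
    ‖logDeriv (intertwiningRatio q A) τ‖
      ≤ q⁻¹ / (1 - q⁻¹) * (2 * Real.log q) + |Real.log A| := by
  have hq0 : 0 < q := zero_lt_one.trans hq
  have hq' : (q : ℂ) ≠ 0 := ofReal_ne_zero.mpr hq0.ne'
  have hA' : (A : ℂ) ≠ 0 := ofReal_ne_zero.mpr hA.ne'
  have hI : HasDerivAt (fun τ : ℝ => I * τ) I τ := by
    simpa using (ofRealCLM.hasDerivAt (x := τ)).const_mul I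
  have hu := hI.const_add (-1)
  have hv := hI.const_sub (-1)
  have hh := hI.fun_neg
  have hu_norm := norm_ofReal_cpow_neg_one_add_I_mul hq0 τ
  have hv_norm : ‖(q : ℂ) ^ (-1 - I * τ)‖ = q⁻¹ := by
    rw [ofReal_cpow_neg_one_sub_I_mul hq0.le, norm_conj, hu_norm]
  have hbound := norm_logDeriv_one_sub_div_one_sub_mul_le
    (hasDerivAt_const_cpow_comp hq' hu).differentiableAt
    (hasDerivAt_const_cpow_comp hq' hv).differentiableAt
    (hasDerivAt_const_cpow_comp hA' hh).differentiableAt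
    (cpow_ne_zero_iff.mpr (Or.inl hq')) (cpow_ne_zero_iff.mpr (Or.inl hq'))
    (cpow_ne_zero_iff.mpr (Or.inl hA')) hu_norm.le hv_norm.le (inv_lt_one_of_one_lt₀ hq)
  rw [norm_logDeriv_ofReal_cpow hq0 hu, norm_logDeriv_ofReal_cpow hq0 hv,
    norm_logDeriv_ofReal_cpow hA hh, abs_of_nonneg (Real.log_nonneg hq.le), norm_neg, norm_I]
    at hbound
  exact hbound.trans_eq (by ring)

theorem norm_deriv_intertwiningRatio_le (hq : 1 < q) (hA : 1 ≤ A) (τ : ℝ) :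
    ‖deriv (intertwiningRatio q A) τ‖ ≤ Real.log A + 2 * Real.log q / (1 - q⁻¹) := by
  have hA0 : 0 < A := zero_lt_one.trans_le hA
  have hr : 0 < 1 - q⁻¹ := sub_pos.mpr (inv_lt_one_of_one_lt₀ hq)
  have hlog_q : 0 ≤ 2 * Real.log q / (1 - q⁻¹) :=
    div_nonneg (by linarith [Real.log_nonneg hq.le]) hr.le
  rw [norm_deriv_eq_norm_logDeriv (norm_intertwiningRatio hq hA0 τ)]
  calc _ ≤ q⁻¹ / (1 - q⁻¹) * (2 * Real.log q) + |Real.log A| :=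
        norm_logDeriv_intertwiningRatio_le hq hA0 τ
    _ = q⁻¹ * (2 * Real.log q / (1 - q⁻¹)) + Real.log A := by
        rw [abs_of_nonneg (Real.log_nonneg hA)]
        ring
    _ ≤ 1 * (2 * Real.log q / (1 - q⁻¹)) + Real.log A := by
        gcongr
        exact (inv_lt_one_of_one_lt₀ hq).le
    _ = _ := by ring

end IntertwiningRatio

/-- Properties of the unitary-axis value of the local intertwining operator at a
nonarchimedean place (unramified case):
`m(y) = ((1 - q^{-1+i(2y+μ)})/(1 - q^{-1-i(2y+μ)})) · A^{-i(2y+μ)}` with `q > 1`, `A ≥ 1`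
has modulus one, and `|m′(y)| ≤ 2(log A + 2 log q/(1 - q⁻¹))`. -/
theorem nonarch_intertwining_scalar
    (q A : ℝ) (hq : 1 < q) (hA : 1 ≤ A) (μ : ℝ)
    (m : ℝ → ℂ)
    (hm : ∀ y : ℝ, m y =
      ((1 - (q : ℂ) ^ ((-1 : ℂ) + Complex.I * (2 * (y : ℂ) + (μ : ℂ)))) /
       (1 - (q : ℂ) ^ ((-1 : ℂ) - Complex.I * (2 * (y : ℂ) + (μ : ℂ))))) *
      (A : ℂ) ^ (-(Complex.I * (2 * (y : ℂ) + (μ : ℂ))))) :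
    (∀ y : ℝ, ‖m y‖ = 1)
    ∧ ∀ y : ℝ, ‖deriv m y‖
        ≤ 2 * (Real.log A + 2 * Real.log q / (1 - q⁻¹)) := by
  have hm' : m = fun y => intertwiningRatio q A (2 * y + μ) :=
    funext fun y => by rw [hm, intertwiningRatio]; push_cast; rfl
  have hderiv (y : ℝ) : deriv m y = (2 : ℝ) • deriv (intertwiningRatio q A) (2 * y + μ) := by
    rw [hm', deriv_comp_mul_left 2 (fun y => intertwiningRatio q A (y + μ)), deriv_comp_add_const]
  refine ⟨fun y => ?_, fun y => ?_⟩
  · rw [hm']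
    exact norm_intertwiningRatio hq (by linarith) _
  · rw [hderiv, norm_smul, Real.norm_two]
    gcongr
    exact norm_deriv_intertwiningRatio_le hq hA _
end

section
/- For every w ∈ ℂ there exists a ∈ [1, 2) such that ∫_0^∞ e^{−a(t² + t^{−2})} t^{w} · dt/t ≠ 0. (The integral converges absolutely for every a > 0 and every w ∈ ℂ.) -/
/-!
Put `G(z) = ∫_0^∞ e^{-z(t² + t⁻²)} t^w dt/t`. The integral converges locally uniformly on the
half-plane `Re z > 0`, so `G` is holomorphic there; if it vanished on `[1, 2)` it would vanish on
the whole half-plane. But for real `a → ∞` the weight `e^{-a(t² + t⁻²)}` concentrates at the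
minimum `t = 1` of `t² + t⁻² = 2 cosh (2 log t)`, where
`Re t^{w-1} = t^{Re w - 1} cos (Im w · log t)` is positive, so `Re G(a) > 0` for `a` large.
-/

open MeasureTheory Set Filter Asymptotics Topology

noncomputable section

theorem integral_pos_of_ae_pos {α : Type*} [MeasurableSpace α] {μ : Measure α} {f : α → ℝ}
    (hμ : μ ≠ 0) (hf : Integrable f μ) (h_pos : ∀ᵐ x ∂μ, 0 < f x) : 0 < ∫ x, f x ∂μ := by
  have h_supp : Function.support f =ᵐ[μ] univ :=
    eventuallyEq_univ.mpr (h_pos.mono fun x hx => hx.ne')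
  rw [integral_pos_iff_support_of_nonneg_ae (h_pos.mono fun x hx => hx.le) hf, measure_congr h_supp,
    Measure.measure_univ_pos]
  exact hμ

lemma indicator_sub_exp_mul_abs_le {α : Type*} {s : Set α} {u h : α → ℝ} {a M' M : ℝ} {x : α}
    (ha : 0 ≤ a) (hM : M' < M) (hs : ∀ y ∈ s, u y < M') (h_pos : u x < M → 0 < h x) :
    s.indicator h x - Real.exp (-(a * (M - M'))) * |h x| ≤ Real.exp (a * (M' - u x)) * h x := by
  have h_exp := Real.exp_pos (-(a * (M - M')))
  by_cases hxM : u x < M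
  · have hx := h_pos hxM
    by_cases hxs : x ∈ s
    · have : 1 ≤ Real.exp (a * (M' - u x)) :=
        Real.one_le_exp (mul_nonneg ha (sub_nonneg.mpr (hs x hxs).le))
      rw [indicator_of_mem hxs]
      nlinarith [abs_nonneg (h x)]
    · rw [indicator_of_notMem hxs]
      nlinarith [Real.exp_pos (a * (M' - u x)), abs_nonneg (h x)]
  · have hxs : x ∉ s := fun hxs => hxM ((hs x hxs).trans hM)
    have : Real.exp (a * (M' - u x)) ≤ Real.exp (-(a * (M - M'))) :=
      Real.exp_le_exp.mpr (by nlinarith)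
    rw [indicator_of_notMem hxs]
    nlinarith [neg_abs_le (h x), Real.exp_pos (a * (M' - u x)), abs_nonneg (h x)]

/-- A weak Laplace principle: on `{u ≥ M}` the weight `e^{-a u}` is smaller by the factor
`e^{-a(M - M')}` than on `{u < M'}`, where `h` has positive integral. -/
theorem eventually_integral_exp_neg_mul_pos {α : Type*} [MeasurableSpace α] {μ : Measure α}
    {u h : α → ℝ} {M' M : ℝ} (hu : Measurable u) (hu_nonneg : ∀ x, 0 ≤ u x)
    (hh : Integrable h μ) (hM : M' < M) (h_pos : ∀ᵐ x ∂μ, u x < M → 0 < h x)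
    (h_meas : 0 < μ {x | u x < M'}) :
    ∀ᶠ a in atTop, 0 < ∫ x, Real.exp (-(a * u x)) * h x ∂μ := by
  set s := {x | u x < M'}
  have hs : MeasurableSet s := measurableSet_lt hu measurable_const
  have hc : 0 < ∫ x in s, h x ∂μ := by
    refine integral_pos_of_ae_pos (by simpa [Measure.restrict_eq_zero] using h_meas.ne')
      hh.restrict ?_
    rw [ae_restrict_iff' hs]
    filter_upwards [h_pos] with x hx hxs using hx (lt_trans hxs hM)
  have h_small : ∀ᶠ a in atTop,
      Real.exp (-(a * (M - M'))) * ∫ x, |h x| ∂μ < ∫ x in s, h x ∂μ := by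
    have : Tendsto (fun a : ℝ => Real.exp (-(a * (M - M'))) * ∫ x, |h x| ∂μ) atTop (𝓝 0) := by
      simpa using ((Real.tendsto_exp_atBot.comp (tendsto_neg_atTop_atBot.comp
        (tendsto_id.atTop_mul_const (sub_pos.mpr hM)))).mul_const (∫ x, |h x| ∂μ))
    exact this.eventually (gt_mem_nhds hc)
  filter_upwards [h_small, eventually_ge_atTop 0] with a ha_small ha
  have hint : Integrable (fun x => Real.exp (-(a * u x)) * h x) μ := by
    refine hh.bdd_mul (c := 1) (by fun_prop) (Eventually.of_forall fun x => ?_)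
    rw [Real.norm_of_nonneg (Real.exp_pos _).le, Real.exp_le_one_iff, neg_nonpos]
    exact mul_nonneg ha (hu_nonneg x)
  have hbound : ∀ᵐ x ∂μ, s.indicator h x - Real.exp (-(a * (M - M'))) * |h x|
      ≤ Real.exp (a * M') * (Real.exp (-(a * u x)) * h x) := by
    filter_upwards [h_pos] with x hx
    rw [← mul_assoc, ← Real.exp_add, ← sub_eq_add_neg, ← mul_sub]
    exact indicator_sub_exp_mul_abs_le ha hM (fun y hy => hy) hx
  have := integral_mono_ae (f := fun x => s.indicator h x - Real.exp (-(a * (M - M'))) * |h x|)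
    ((hh.indicator hs).sub (hh.abs.const_mul _)) (hint.const_mul _) hbound
  rw [integral_sub (hh.indicator hs) (hh.abs.const_mul _), integral_indicator hs,
    integral_const_mul, integral_const_mul] at this
  exact pos_of_mul_pos_right (by linarith) (Real.exp_pos _).le

theorem AnalyticOnNhd.eqOn_zero_of_eventually_ofReal_eq_zero {E : Type*} [NormedAddCommGroup E]
    [NormedSpace ℂ E] {f : ℂ → E} {U : Set ℂ} (hf : AnalyticOnNhd ℂ f U) (hU : IsPreconnected U)
    {x : ℝ} (hx : (x : ℂ) ∈ U) (h0 : ∀ᶠ t : ℝ in 𝓝 x, f t = 0) : EqOn f 0 U := by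
  have h_ofReal : Tendsto ((↑) : ℝ → ℂ) (𝓝[≠] x) (𝓝[≠] x) :=
    Complex.continuous_ofReal.continuousWithinAt.tendsto_nhdsWithin
      fun t ht => Complex.ofReal_injective.ne ht
  exact hf.eqOn_zero_of_preconnected_of_frequently_eq_zero hU hx
    (h_ofReal.frequently (h0.filter_mono nhdsWithin_le_nhds).frequently)

lemma mul_exp_neg_mul_le {r v : ℝ} (hr : 0 < r) : v * Real.exp (-(r * v)) ≤ Real.exp (-1) / r := by
  rw [le_div_iff₀ hr]
  linarith [Real.mul_exp_neg_le_exp_neg_one (r * v)]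

lemma norm_cexp_neg_mul_ofReal (z : ℂ) (v : ℝ) :
    ‖Complex.exp (-z * v)‖ = Real.exp (-(z.re * v)) := by
  simp [Complex.norm_exp]

lemma re_ofReal_cpow_div_pos {t : ℝ} (ht : 0 < t) {w : ℂ}
    (hcos : 0 < Real.cos (w.im * Real.log t)) : 0 < ((t : ℂ) ^ w / t).re := by
  have ht' : (t : ℂ) ≠ 0 := by exact_mod_cast ht.ne'
  have h_sub : (t : ℂ) ^ w / t = (t : ℂ) ^ (w - 1) := by
    rw [Complex.cpow_sub _ _ ht', Complex.cpow_one]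
  rw [h_sub, Complex.cpow_def_of_ne_zero ht', ← Complex.ofReal_log ht.le, Complex.exp_re]
  simp only [Complex.mul_im, Complex.ofReal_re, Complex.ofReal_im, Complex.sub_im,
    Complex.one_im, sub_zero, zero_mul, add_zero]
  rw [mul_comm (Real.log t)]
  exact mul_pos (Real.exp_pos _) hcos

def sqAddInvSq (t : ℝ) : ℝ := t ^ 2 + t ^ (-2 : ℤ)

lemma ofReal_sqAddInvSq (t : ℝ) : (sqAddInvSq t : ℂ) = (t : ℂ) ^ 2 + (t : ℂ) ^ (-2 : ℤ) := by
  push_cast [sqAddInvSq]; rfl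

lemma sqAddInvSq_nonneg (t : ℝ) : 0 ≤ sqAddInvSq t := by
  unfold sqAddInvSq; positivity

lemma sqAddInvSq_inv (t : ℝ) : sqAddInvSq t⁻¹ = sqAddInvSq t := by
  simp only [sqAddInvSq, inv_zpow', zpow_neg, inv_pow]
  rw [add_comm]; simp

lemma le_sqAddInvSq {t : ℝ} (ht : 1 ≤ t) : t ≤ sqAddInvSq t := by
  have : 0 ≤ t ^ (-2 : ℤ) := by positivity
  unfold sqAddInvSq; nlinarith

lemma sqAddInvSq_eq_two_mul_cosh {t : ℝ} (ht : 0 < t) :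
    sqAddInvSq t = 2 * Real.cosh (2 * Real.log t) := by
  have h : Real.exp (2 * Real.log t) = t ^ 2 := by
    rw [← Real.log_rpow ht, Real.exp_log (by positivity), Real.rpow_two]
  rw [Real.cosh_eq, Real.exp_neg, h, sqAddInvSq, zpow_neg]
  norm_cast; ring

lemma continuousOn_sqAddInvSq : ContinuousOn sqAddInvSq (Ioi 0) := by
  unfold sqAddInvSq
  fun_prop (disch := exact fun t ht => Or.inl (ne_of_gt ht))

lemma measurable_sqAddInvSq : Measurable sqAddInvSq := by
  unfold sqAddInvSq; fun_prop

/-- `t² + t⁻² < 2 cosh (2δ)` forces `|log t| < δ`, and `δ = 1 / (|y| + 1)` makes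
`|y log t| < 1 < π / 2`. -/
lemma cos_mul_log_pos_of_sqAddInvSq_lt {t : ℝ} (ht : 0 < t) (y : ℝ)
    (h : sqAddInvSq t < 2 * Real.cosh (2 * (|y| + 1)⁻¹)) : 0 < Real.cos (y * Real.log t) := by
  rw [sqAddInvSq_eq_two_mul_cosh ht, mul_lt_mul_iff_right₀ two_pos, Real.cosh_lt_cosh, abs_mul,
    abs_mul, abs_two, abs_of_pos (by positivity : (0 : ℝ) < (|y| + 1)⁻¹),
    mul_lt_mul_iff_right₀ two_pos, ← one_div, lt_div_iff₀ (by positivity)] at h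
  have h_abs : |y * Real.log t| < Real.pi / 2 := by
    rw [abs_mul]
    nlinarith [abs_nonneg y, abs_nonneg (Real.log t), Real.pi_gt_three]
  exact Real.cos_pos_of_mem_Ioo (abs_lt.mp h_abs)

lemma isBigO_cexp_neg_mul_sqAddInvSq_atTop {z : ℂ} (hz : 0 < z.re) (c : ℝ) :
    (fun t => Complex.exp (-z * sqAddInvSq t)) =O[atTop] (· ^ c) := by
  refine IsBigO.trans ?_ (isLittleO_exp_neg_mul_rpow_atTop hz c).isBigO
  refine IsBigO.of_bound 1 ((eventually_ge_atTop 1).mono fun t ht => ?_)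
  rw [norm_cexp_neg_mul_ofReal, one_mul, Real.norm_of_nonneg (Real.exp_pos _).le, Real.exp_le_exp,
    neg_mul, neg_le_neg_iff]
  exact mul_le_mul_of_nonneg_left (le_sqAddInvSq ht) hz.le

/-- Near `0` the kernel decays as fast as at `∞`, by the symmetry `t ↦ t⁻¹`. -/
lemma isBigO_cexp_neg_mul_sqAddInvSq_nhdsGT_zero {z : ℂ} (hz : 0 < z.re) (c : ℝ) :
    (fun t => Complex.exp (-z * sqAddInvSq t)) =O[𝓝[>] 0] (· ^ c) := by
  refine ((isBigO_cexp_neg_mul_sqAddInvSq_atTop hz (-c)).comp_tendsto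
    tendsto_inv_nhdsGT_zero).congr' (Eventually.of_forall fun t => ?_) ?_
  · simp [sqAddInvSq_inv]
  · filter_upwards [self_mem_nhdsWithin] with t (ht : 0 < t)
    simp [Real.inv_rpow ht.le, Real.rpow_neg ht.le]

lemma mellinConvergent_cexp_neg_mul_sqAddInvSq {z : ℂ} (hz : 0 < z.re) (w : ℂ) :
    MellinConvergent (fun t => Complex.exp (-z * sqAddInvSq t)) w := by
  refine mellinConvergent_of_isBigO_rpow ?_ (isBigO_cexp_neg_mul_sqAddInvSq_atTop hz _)
    (lt_add_one w.re) (isBigO_cexp_neg_mul_sqAddInvSq_nhdsGT_zero hz (-(w.re - 1))) (sub_one_lt _)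
  exact (Complex.continuous_exp.comp_continuousOn ((continuous_const.mul
    Complex.continuous_ofReal).comp_continuousOn continuousOn_sqAddInvSq)).locallyIntegrableOn
    measurableSet_Ioi

def besselIntegrand (w z : ℂ) (t : ℝ) : ℂ :=
  Complex.exp (-z * ((t : ℂ) ^ 2 + (t : ℂ) ^ (-2 : ℤ))) * (t : ℂ) ^ w / t

def besselIntegral (w z : ℂ) : ℂ := ∫ t in Ioi 0, besselIntegrand w z t

lemma besselIntegrand_eq (w z : ℂ) (t : ℝ) :
    besselIntegrand w z t = Complex.exp (-z * sqAddInvSq t) * ((t : ℂ) ^ w / t) := by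
  rw [besselIntegrand, ofReal_sqAddInvSq, mul_div_assoc]

lemma measurable_besselIntegrand (w z : ℂ) : Measurable (besselIntegrand w z) := by
  unfold besselIntegrand; fun_prop

lemma norm_besselIntegrand (w z : ℂ) (t : ℝ) :
    ‖besselIntegrand w z t‖ = Real.exp (-(z.re * sqAddInvSq t)) * ‖(t : ℂ) ^ w / t‖ := by
  rw [besselIntegrand_eq, norm_mul, norm_cexp_neg_mul_ofReal]

lemma re_besselIntegrand_ofReal (w : ℂ) (a t : ℝ) :
    (besselIntegrand w a t).re = Real.exp (-(a * sqAddInvSq t)) * ((t : ℂ) ^ w / t).re := by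
  rw [besselIntegrand_eq, ← Complex.re_ofReal_mul]
  push_cast
  ring_nf

lemma integrableOn_besselIntegrand (w : ℂ) {z : ℂ} (hz : 0 < z.re) :
    IntegrableOn (besselIntegrand w z) (Ioi 0) := by
  refine (mellinConvergent_cexp_neg_mul_sqAddInvSq hz w).congr_fun (fun t (ht : 0 < t) => ?_)
    measurableSet_Ioi
  dsimp only
  rw [besselIntegrand_eq, smul_eq_mul, mul_comm, Complex.cpow_sub _ _ (by exact_mod_cast ht.ne'),
    Complex.cpow_one]

lemma hasDerivAt_besselIntegrand (w z : ℂ) (t : ℝ) :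
    HasDerivAt (besselIntegrand w · t) (-sqAddInvSq t * besselIntegrand w z t) z := by
  simp_rw [besselIntegrand_eq]
  have h : HasDerivAt (fun z : ℂ => -z * sqAddInvSq t) (-sqAddInvSq t) z := by
    simpa using ((hasDerivAt_id z).neg.mul_const (sqAddInvSq t : ℂ))
  exact (h.cexp.mul_const _).congr_deriv (by ring)

lemma norm_deriv_besselIntegrand_le (w : ℂ) {r : ℝ} (hr : 0 < r) {z : ℂ} (hz : 2 * r < z.re)
    (t : ℝ) :
    ‖-(sqAddInvSq t : ℂ) * besselIntegrand w z t‖ ≤ Real.exp (-1) / r * ‖besselIntegrand w r t‖ := by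
  have hu := sqAddInvSq_nonneg t
  rw [norm_mul, norm_neg, Complex.norm_real, Real.norm_of_nonneg hu, norm_besselIntegrand,
    norm_besselIntegrand, ← mul_assoc, ← mul_assoc, Complex.ofReal_re]
  refine mul_le_mul_of_nonneg_right ?_ (norm_nonneg _)
  calc sqAddInvSq t * Real.exp (-(z.re * sqAddInvSq t))
      ≤ sqAddInvSq t * Real.exp (-(r * sqAddInvSq t)) * Real.exp (-(r * sqAddInvSq t)) := by
        rw [mul_assoc, ← Real.exp_add]
        gcongr; nlinarith
    _ ≤ Real.exp (-1) / r * Real.exp (-(r * sqAddInvSq t)) := by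
        gcongr; exact mul_exp_neg_mul_le hr

lemma differentiableOn_besselIntegral (w : ℂ) :
    DifferentiableOn ℂ (besselIntegral w) {z | 0 < z.re} := by
  intro z₀ (hz₀ : 0 < z₀.re)
  set r := z₀.re / 4
  have hr : 0 < r := by positivity
  have hU : {z : ℂ | 2 * r < z.re} ∈ 𝓝 z₀ :=
    (isOpen_lt continuous_const Complex.continuous_re).mem_nhds
      (by simp only [mem_ofPred_eq, r]; linarith)
  have h_deriv := hasDerivAt_integral_of_dominated_loc_of_deriv_le
    (bound := fun t => Real.exp (-1) / r * ‖besselIntegrand w r t‖) hU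
    (Eventually.of_forall fun z => (measurable_besselIntegrand w z).aestronglyMeasurable)
    (integrableOn_besselIntegrand w hz₀)
    ((Complex.measurable_ofReal.comp measurable_sqAddInvSq).neg.mul
      (measurable_besselIntegrand w z₀)).aestronglyMeasurable
    (ae_of_all _ fun t z hz => norm_deriv_besselIntegrand_le w hr hz t)
    ((integrableOn_besselIntegrand w (by simpa using hr)).norm.const_mul _)
    (ae_of_all _ fun t z _ => hasDerivAt_besselIntegrand w z t)
  exact h_deriv.2.differentiableAt.differentiableWithinAt

lemma measure_sqAddInvSq_lt_pos {M : ℝ} (hM : 2 < M) :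
    0 < volume.restrict (Ioi 0) {t | sqAddInvSq t < M} := by
  rw [Measure.restrict_apply (measurableSet_lt measurable_sqAddInvSq measurable_const),
    inter_comm]
  exact (continuousOn_sqAddInvSq.isOpen_inter_preimage isOpen_Ioi isOpen_Iio).measure_pos _
    ⟨1, by norm_num, by norm_num [sqAddInvSq, hM]⟩

lemma exists_re_besselIntegral_pos (w : ℂ) : ∃ a : ℝ, 0 < a ∧ 0 < (besselIntegral w a).re := by
  set δ := (|w.im| + 1)⁻¹
  have hδ : 0 < δ := by positivity
  have hM : 2 * Real.cosh δ < 2 * Real.cosh (2 * δ) := by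
    rw [mul_lt_mul_iff_right₀ two_pos, Real.cosh_lt_cosh, abs_of_pos hδ, abs_of_pos (by positivity)]
    linarith
  have h_pos : ∀ᵐ t ∂volume.restrict (Ioi 0), sqAddInvSq t < 2 * Real.cosh (2 * δ) →
      0 < (besselIntegrand w (1 : ℝ) t).re := by
    filter_upwards [ae_restrict_mem measurableSet_Ioi] with t (ht : 0 < t) h
    rw [re_besselIntegrand_ofReal]
    exact mul_pos (Real.exp_pos _)
      (re_ofReal_cpow_div_pos ht (cos_mul_log_pos_of_sqAddInvSq_lt ht w.im h))
  have h_meas := measure_sqAddInvSq_lt_pos (M := 2 * Real.cosh δ)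
    (by linarith [Real.one_lt_cosh.mpr hδ.ne'])
  obtain ⟨a, h_int_pos, ha⟩ := ((eventually_integral_exp_neg_mul_pos measurable_sqAddInvSq
    sqAddInvSq_nonneg (integrableOn_besselIntegrand w (by simp)).re hM h_pos h_meas).and
    (eventually_ge_atTop 0)).exists
  have h_shift : ∀ t, Real.exp (-(a * sqAddInvSq t)) * (besselIntegrand w (1 : ℝ) t).re
      = (besselIntegrand w ↑(a + 1) t).re := fun t => by
    rw [re_besselIntegrand_ofReal, re_besselIntegrand_ofReal, ← mul_assoc, ← Real.exp_add]
    ring_nf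
  refine ⟨a + 1, by linarith, ?_⟩
  rw [besselIntegral, ← RCLike.re_to_complex,
    ← integral_re (integrableOn_besselIntegrand w (by simp; linarith))]
  simpa only [RCLike.re_to_complex, h_shift] using h_int_pos

/-- For every `w ∈ ℂ` the integral `∫_0^∞ e^{-a(t² + t^{-2})} t^w dt/t` (which converges
absolutely for every `a > 0`) is nonzero for some `a ∈ [1, 2)`. -/
theorem exists_bessel_integral_ne_zero (w : ℂ) :
    (∀ a : ℝ, 0 < a →
      IntegrableOn
        (fun t : ℝ =>
          Complex.exp (-(a : ℂ) * ((t : ℂ) ^ 2 + (t : ℂ) ^ (-2 : ℤ))) * (t : ℂ) ^ w / (t : ℂ))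
        (Set.Ioi (0 : ℝ)) (volume : Measure ℝ))
    ∧ ∃ a : ℝ, a ∈ Set.Ico (1 : ℝ) 2 ∧
      (∫ t in Set.Ioi (0 : ℝ),
          Complex.exp (-(a : ℂ) * ((t : ℂ) ^ 2 + (t : ℂ) ^ (-2 : ℤ))) * (t : ℂ) ^ w / (t : ℂ))
        ≠ 0 := by
  refine ⟨fun a ha => integrableOn_besselIntegrand w (by simpa using ha), ?_⟩
  by_contra! h_zero
  have h_eq : EqOn (besselIntegral w) 0 {z | 0 < z.re} :=
    ((differentiableOn_besselIntegral w).analyticOnNhd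
      (isOpen_lt continuous_const Complex.continuous_re)).eqOn_zero_of_eventually_ofReal_eq_zero
      (convex_halfSpace_re_gt 0).isPreconnected (x := 3 / 2) (by norm_num)
      (Filter.mem_of_superset (Ico_mem_nhds (by norm_num) (by norm_num)) h_zero)
  obtain ⟨a, ha, h_re⟩ := exists_re_besselIntegral_pos w
  simp [h_eq (show 0 < (a : ℂ).re by simpa using ha)] at h_re
end
end
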